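/- arXiv:0905.1476 — 2 statements merged into one kernel-verified Lean document; each statement's English description precedes it below -/
import Mathlib

section
/- Let U ⊆ ℂ be open, let f : U → ℓ² be holomorphic (complex differentiable), and let z₀ ∈ U with f(z₀) ≠ 0. Then the real-valued function u(z) = ‖f(z)‖_{ℓ²} is twice continuously differentiable on a neighborhood of z₀ and its Laplacian Δu = ∂²u/∂x² + ∂²u/∂y² (z = x + iy) satisfies Δu(z₀) = (2/‖f(z₀)‖³) ( ‖f(z₀)‖² ‖f′(z₀)‖² − (1/2) |⟨f(z₀), f′(z₀)⟩|² ), where f′ is the complex derivative, ‖·‖ is the ℓ² norm and ⟨·,·⟩ the ℓ² inner product. -/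
open Complex Topology

noncomputable section

set_option maxHeartbeats 1000000
set_option synthInstance.maxHeartbeats 400000

/-- The Laplacian `Δu = ∂²u/∂x² + ∂²u/∂y²` of `u : ℂ → ℝ` at `z`, computed as the sum of the
second directional derivatives in the directions `1` and `I` (`z = x + iy`). -/
def lap (u : ℂ → ℝ) (z : ℂ) : ℝ :=
  fderiv ℝ (fun w => fderiv ℝ u w 1) z 1 +
    fderiv ℝ (fun w => fderiv ℝ u w Complex.I) z Complex.I

section Aux

variable {F : Type*} [NormedAddCommGroup F] [InnerProductSpace ℂ F]

local notation "⟪" x ", " y "⟫" => @inner ℂ _ _ x y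

/-- Derivative of `w ↦ re ⟪f w, g w⟫`. -/
lemma LapAux.hasFDerivAt_re_inner {f g : ℂ → F} {L M : ℂ →L[ℝ] F} {w : ℂ}
    (hf : HasFDerivAt f L w) (hg : HasFDerivAt g M w) :
    HasFDerivAt (fun z => (⟪f z, g z⟫).re)
      (Complex.reCLM.comp ((fderivInnerCLM ℂ (f w, g w)).comp (L.prod M))) w :=
  Complex.reCLM.hasFDerivAt.comp w (hf.inner ℂ hg)

/-- Derivative of the norm of a nonvanishing differentiable map into a complex
inner product space. -/
lemma LapAux.hasFDerivAt_norm {f : ℂ → F} {L : ℂ →L[ℝ] F} {w : ℂ}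
    (hf : HasFDerivAt f L w) (h0 : f w ≠ 0) :
    HasFDerivAt (fun z => ‖f z‖)
      ((2 * ‖f w‖)⁻¹ •
        (Complex.reCLM.comp ((fderivInnerCLM ℂ (f w, f w)).comp (L.prod L)))) w := by
  have hg := LapAux.hasFDerivAt_re_inner hf hf
  have hpos : 0 < ‖f w‖ := norm_pos_iff.2 h0
  have hgw : (⟪f w, f w⟫).re = ‖f w‖ ^ 2 := by
    simpa using inner_self_eq_norm_sq (𝕜 := ℂ) (f w)
  have hne : (⟪f w, f w⟫).re ≠ 0 := by rw [hgw]; positivity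
  have h := (Real.hasDerivAt_sqrt hne).comp_hasFDerivAt w hg
  have heq : (fun z => Real.sqrt ((⟪f z, f z⟫).re)) = fun z => ‖f z‖ := by
    funext z
    have : (⟪f z, f z⟫).re = ‖f z‖ ^ 2 := by
      simpa using inner_self_eq_norm_sq (𝕜 := ℂ) (f z)
    rw [this, Real.sqrt_sq (norm_nonneg _)]
  have h' : HasFDerivAt (fun z => ‖f z‖)
      ((1 / (2 * Real.sqrt ((⟪f w, f w⟫).re))) •
        (Complex.reCLM.comp ((fderivInnerCLM ℂ (f w, f w)).comp (L.prod L)))) w := by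
    rw [← heq]; exact h
  have hsc : (1 / (2 * Real.sqrt ((⟪f w, f w⟫).re))) = (2 * ‖f w‖)⁻¹ := by
    rw [hgw, Real.sqrt_sq hpos.le, one_div]
  rwa [hsc] at h'

end Aux

/-- For `f : U → ℓ²` holomorphic and `f(z₀) ≠ 0`, the function `u = ‖f‖` is `C²` near `z₀` and
`Δu(z₀) = (2/‖f(z₀)‖³)(‖f(z₀)‖²‖f′(z₀)‖² − ½|⟨f(z₀), f′(z₀)⟩|²)`. -/
theorem laplacian_norm_of_holomorphic (U : Set ℂ) (hU : IsOpen U)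
    (f : ℂ → lp (fun _ : ℕ => ℂ) 2) (hf : DifferentiableOn ℂ f U)
    (z₀ : ℂ) (hz₀ : z₀ ∈ U) (hnz : f z₀ ≠ 0) :
    (∃ V ∈ 𝓝 z₀, ContDiffOn ℝ 2 (fun z => ‖f z‖) V) ∧
      lap (fun z => ‖f z‖) z₀ =
        2 / ‖f z₀‖ ^ 3 *
          (‖f z₀‖ ^ 2 * ‖deriv f z₀‖ ^ 2 -
            1 / 2 * ‖(inner ℂ (f z₀) (deriv f z₀) : ℂ)‖ ^ 2) := by
  have hfa : AnalyticOnNhd ℂ f U := hf.analyticOnNhd hU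
  have hC : ContDiffAt ℝ 2 (fun z => ‖f z‖) z₀ := by
    have h1 : ContDiffAt ℂ 2 f z₀ := (hfa z₀ hz₀).contDiffAt
    exact (h1.restrict_scalars ℝ).norm ℂ hnz
  constructor
  · exact hC.contDiffOn le_rfl (by simp)
  · have hsopen : IsOpen (U ∩ f ⁻¹' ({0}ᶜ)) :=
      hf.continuousOn.isOpen_inter_preimage hU isOpen_compl_singleton
    have hs_nhds : (U ∩ f ⁻¹' ({0}ᶜ)) ∈ 𝓝 z₀ := hsopen.mem_nhds ⟨hz₀, hnz⟩
    have hL : ∀ w ∈ U, HasFDerivAt f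
        (((1 : ℂ →L[ℂ] ℂ).smulRight (deriv f w)).restrictScalars ℝ) w := fun w hw =>
      ((hfa w hw).differentiableAt.hasDerivAt.hasFDerivAt).restrictScalars ℝ
    have hkey : ∀ v : ℂ, ∀ᶠ w in 𝓝 z₀, fderiv ℝ (fun z => ‖f z‖) w v
        = (inner ℂ (f w) (v • deriv f w) : ℂ).re / ‖f w‖ := by
      intro v
      filter_upwards [hs_nhds] with w hw
      rw [(LapAux.hasFDerivAt_norm (hL w hw.1) hw.2).fderiv]
      have hr : ‖f w‖ ≠ 0 := norm_ne_zero_iff.2 hw.2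
      simp only [ContinuousLinearMap.smul_apply, ContinuousLinearMap.coe_comp',
        Function.comp_apply, ContinuousLinearMap.prod_apply, fderivInnerCLM_apply,
        ContinuousLinearMap.coe_restrictScalars', ContinuousLinearMap.smulRight_apply,
        ContinuousLinearMap.one_apply, Complex.reCLM_apply, smul_eq_mul, Complex.add_re]
      erw [ContinuousLinearMap.prod_apply, ContinuousLinearMap.coe_restrictScalars']
      simp only [ContinuousLinearMap.smulRight_apply, ContinuousLinearMap.one_apply]
      rw [← inner_conj_symm (f w) (v • deriv f w)]
      simp only [Complex.conj_re]
      field_simp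
      ring
    have hlap : ∀ v : ℂ, fderiv ℝ (fun w => fderiv ℝ (fun z => ‖f z‖) w v) z₀
        = fderiv ℝ (fun w => (inner ℂ (f w) (v • deriv f w) : ℂ).re / ‖f w‖) z₀ :=
      fun v => Filter.EventuallyEq.fderiv_eq (hkey v)
    have hdfa : AnalyticOnNhd ℂ (deriv f) U := hfa.deriv_of_isOpen hU
    have hM : HasFDerivAt (deriv f)
        (((1 : ℂ →L[ℂ] ℂ).smulRight (deriv (deriv f) z₀)).restrictScalars ℝ) z₀ :=
      ((hdfa z₀ hz₀).differentiableAt.hasDerivAt.hasFDerivAt).restrictScalars ℝ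
    have hr : (0:ℝ) < ‖f z₀‖ := norm_pos_iff.2 hnz
    have main : ∀ v : ℂ, fderiv ℝ (fun w => (inner ℂ (f w) (v • deriv f w) : ℂ).re / ‖f w‖) z₀ v
        = ((v * v * (inner ℂ (f z₀) (deriv (deriv f) z₀) : ℂ)).re
              + Complex.normSq v * ‖deriv f z₀‖ ^ 2) / ‖f z₀‖
            - (v * (inner ℂ (f z₀) (deriv f z₀) : ℂ)).re ^ 2 / ‖f z₀‖ ^ 3 := by
      intro v
      have hMv : HasFDerivAt (fun w => v • deriv f w)
          (v • (((1 : ℂ →L[ℂ] ℂ).smulRight (deriv (deriv f) z₀)).restrictScalars ℝ)) z₀ :=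
        hM.const_smul v
      have hnum := LapAux.hasFDerivAt_re_inner (hL z₀ hz₀) hMv
      have hden := LapAux.hasFDerivAt_norm (hL z₀ hz₀) hnz
      have hinv : HasFDerivAt (fun w => (‖f w‖)⁻¹)
          ((-(‖f z₀‖ ^ 2)⁻¹) • ((2 * ‖f z₀‖)⁻¹ •
            (Complex.reCLM.comp ((fderivInnerCLM ℂ (f z₀, f z₀)).comp
              ((((1 : ℂ →L[ℂ] ℂ).smulRight (deriv f z₀)).restrictScalars ℝ).prod
                (((1 : ℂ →L[ℂ] ℂ).smulRight (deriv f z₀)).restrictScalars ℝ)))))) z₀ :=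
        (hasDerivAt_inv (ne_of_gt hr)).comp_hasFDerivAt z₀ hden
      have hmul := hnum.mul hinv
      have heqf : (fun w => (inner ℂ (f w) (v • deriv f w) : ℂ).re / ‖f w‖)
          = fun w => (inner ℂ (f w) (v • deriv f w) : ℂ).re * (‖f w‖)⁻¹ := by
        funext w; rw [div_eq_mul_inv]
      rw [heqf, HasFDerivAt.fderiv (f := fun w => (inner ℂ (f w) (v • deriv f w) : ℂ).re * (‖f w‖)⁻¹) hmul]
      have hBB : (inner ℂ (deriv f z₀) (deriv f z₀) : ℂ).re = ‖deriv f z₀‖ ^ 2 := by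
        simpa using inner_self_eq_norm_sq (𝕜 := ℂ) (deriv f z₀)
      have hBBim : (inner ℂ (deriv f z₀) (deriv f z₀) : ℂ).im = 0 :=
        inner_self_im (𝕜 := ℂ) (deriv f z₀)
      have hBA : (inner ℂ (deriv f z₀) (f z₀) : ℂ)
          = (starRingEnd ℂ) (inner ℂ (f z₀) (deriv f z₀)) := (inner_conj_symm _ _).symm
      simp only [ContinuousLinearMap.add_apply, ContinuousLinearMap.smul_apply,
        ContinuousLinearMap.coe_comp', Function.comp_apply, ContinuousLinearMap.prod_apply,
        fderivInnerCLM_apply, ContinuousLinearMap.coe_restrictScalars',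
        ContinuousLinearMap.smulRight_apply, ContinuousLinearMap.one_apply,
        Complex.reCLM_apply, smul_eq_mul, Complex.add_re,
        inner_smul_right, inner_smul_left, hBA, map_mul, Complex.conj_conj,
        Complex.mul_re, Complex.mul_im, Complex.conj_re, Complex.conj_im,
        hBB, hBBim, Complex.normSq_apply]
      have hsm : ∀ (c : ℂ) (T : ℂ →L[ℝ] lp (fun _ : ℕ => ℂ) 2) (x : ℂ), (c • T) x = c • T x :=
        fun _ _ _ => rfl
      erw [ContinuousLinearMap.prod_apply, ContinuousLinearMap.coe_restrictScalars', hsm,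
        ContinuousLinearMap.coe_restrictScalars']
      simp only [ContinuousLinearMap.smulRight_apply, ContinuousLinearMap.one_apply, smul_eq_mul,
        inner_smul_right, inner_smul_left, hBA, map_mul, Complex.conj_conj,
        Complex.mul_re, Complex.mul_im, Complex.conj_re, Complex.conj_im, hBB, hBBim]
      field_simp
      ring
    rw [lap, hlap 1, hlap Complex.I, main 1, main Complex.I]
    have hz2 : ‖(inner ℂ (f z₀) (deriv f z₀) : ℂ)‖ ^ 2
        = (inner ℂ (f z₀) (deriv f z₀) : ℂ).re ^ 2 + (inner ℂ (f z₀) (deriv f z₀) : ℂ).im ^ 2 := by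
      rw [Complex.sq_norm, Complex.normSq_apply]; ring
    simp only [one_mul, Complex.I_mul_I, Complex.normSq_one, Complex.normSq_I,
      Complex.neg_re, Complex.neg_im, Complex.one_re, Complex.I_re, Complex.mul_re, Complex.I_im,
      Complex.mul_im, Complex.one_im]
    rw [hz2]
    field_simp
    ring
end
end

section
/- Let ζ ∈ B_n with 0 < δ := 1 − |ζ| ≤ 1/4, and let k ≥ 1 be an integer with 2^k δ ≤ 1. Set ζ_j = ((1 − 2^j δ)/(1 − δ)) ζ for j = k−1, k. Then for every w ∈ S_{ζ_k} \ S_{ζ_{k−1}} one has 2^{k−2} δ ≤ |1 − ⟨w, ζ⟩| ≤ 2^{k+2} δ. -/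
open MeasureTheory Metric Set Complex Topology
open scoped ENNReal NNReal

noncomputable section

/-- `ℂⁿ` with the Euclidean (Hermitian) norm: the ball `B_n` is `Metric.ball 0 1`. -/
abbrev En (n : ℕ) : Type := EuclideanSpace ℂ (Fin n)

instance (n : ℕ) : MeasurableSpace (En n) := borel _
instance (n : ℕ) : BorelSpace (En n) := ⟨rfl⟩

/-- The Hilbert space `ℓ²` of square-summable complex sequences. -/
abbrev l2 : Type := lp (fun _ : ℕ => ℂ) 2

/-- The pairing `⟨z,w⟩ = ∑_j z_j conj (w_j)`. -/
def herm {n : ℕ} (z w : En n) : ℂ := ∑ j, z j * (starRingEnd ℂ) (w j)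

/-- The Carleson tent `S_ζ`. -/
def tent {n : ℕ} (ζ : En n) : Set (En n) :=
  {z ∈ ball (0 : En n) 1 | 1 / 2 < (1 - ‖ζ‖) / ‖1 - herm z ζ‖}

/-- The measure `λ_n` on `B_n`, `dλ_n(z) = (1-|z|²)^{-n-1} dV(z)`. -/
def lambdaM (n : ℕ) : Measure (En n) :=
  ((volume : Measure (En n)).restrict (ball (0 : En n) 1)).withDensity
    fun z => ENNReal.ofReal ((1 - ‖z‖ ^ 2) ^ (-(n : ℝ) - 1))

/-- The normalized rotation-invariant surface measure `σ` on the unit sphere `∂B_n`. -/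
def sphereM (n : ℕ) : Measure (sphere (0 : En n) 1) :=
  (((volume : Measure (En n)).toSphere) Set.univ)⁻¹ • ((volume : Measure (En n)).toSphere)

/-- The squared Hilbert–Schmidt norm of the holomorphic derivative `f′(z) = (∂f_i/∂z_j)`. -/
def hsSq {n : ℕ} (f : En n → l2) (z : En n) : ℝ :=
  ∑' i : ℕ, ∑ j, ‖(fderiv ℂ f z (EuclideanSpace.single j 1)) i‖ ^ 2

/-- The squared Carleson-measure norm `‖g‖_CM²` of a scalar function on the ball. -/
def cmSq {n : ℕ} (g : En n → ℝ) : ℝ≥0∞ :=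
  ⨆ (ζ : En n) (_ : ζ ∈ ball (0 : En n) 1 \ {0}),
    (ENNReal.ofReal ((1 - ‖ζ‖) ^ n))⁻¹ *
      ∫⁻ z in tent ζ, ENNReal.ofReal ((g z) ^ 2) ∂(lambdaM n)

lemma herm_eq_inner {n : ℕ} (z w : En n) : herm z w = @inner ℂ _ _ w z := by
  simp [herm, PiLp.inner_apply, RCLike.inner_apply, mul_comm]

lemma herm_smul_right {n : ℕ} (t : ℝ) (z w : En n) :
    herm z (t • w) = (t : ℂ) * herm z w := by
  simp only [herm, Finset.mul_sum, PiLp.smul_apply, Complex.real_smul, map_mul,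
    Complex.conj_ofReal]
  exact Finset.sum_congr rfl fun j _ => by ring

lemma aux1 (P δ : ℝ) (hδ0 : 0 < δ) (hδ4 : δ ≤ 1/4) (hP0 : 0 < P) :
    P - δ ≤ 4/3*P*(1-δ) := by nlinarith

lemma aux2 (P δ : ℝ) (hδ0 : 0 < δ) (hδ4 : δ ≤ 1/4) (hP0 : 0 < P) :
    P/2 - δ ≤ 2/3*P*(1-δ) := by nlinarith


/-- The key geometric estimate (3.6): if `ζ ∈ B_n`, `δ = 1-|ζ| ≤ 1/4`, `k ≥ 1`, `2^k δ ≤ 1`, and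
`ζ_j = ((1-2^jδ)/(1-δ))ζ`, then for `w ∈ S_{ζ_k} \ S_{ζ_{k-1}}` one has
`2^{k-2}δ ≤ |1-⟨w,ζ⟩| ≤ 2^{k+2}δ`. -/
theorem annulus_distance_estimate (n : ℕ) (hn : 1 ≤ n)
    (ζ : En n) (hζ : ζ ∈ ball (0 : En n) 1) (δ : ℝ) (hδdef : δ = 1 - ‖ζ‖)
    (hδ0 : 0 < δ) (hδ4 : δ ≤ 1 / 4) (k : ℕ) (hk : 1 ≤ k)
    (h2k : (2 : ℝ) ^ k * δ ≤ 1) (w : En n)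
    (hw : w ∈ tent (((1 - (2 : ℝ) ^ (k : ℤ) * δ) / (1 - δ)) • ζ) \
            tent (((1 - (2 : ℝ) ^ ((k : ℤ) - 1) * δ) / (1 - δ)) • ζ)) :
    (2 : ℝ) ^ ((k : ℤ) - 2) * δ ≤ ‖1 - herm w ζ‖ ∧
      ‖1 - herm w ζ‖ ≤ (2 : ℝ) ^ ((k : ℤ) + 2) * δ := by
  obtain ⟨hw1, hw2⟩ := hw
  have hζn : ‖ζ‖ = 1 - δ := by rw [hδdef]; ring
  have hδ1 : (0:ℝ) < 1 - δ := by linarith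
  set P := (2:ℝ)^k * δ with hP
  have hP0 : 0 < P := by positivity
  have hPδ : 2*δ ≤ P := by
    have h2 : (2:ℝ) ≤ 2^k := by
      calc (2:ℝ) = 2^1 := by norm_num
      _ ≤ 2^k := pow_le_pow_right₀ (by norm_num) hk
    nlinarith
  have hz1 : (2:ℝ)^(k:ℤ) = 2^k := zpow_natCast 2 k
  have hz2 : (2:ℝ)^((k:ℤ)-1) = 2^k / 2 := by
    rw [zpow_sub₀ (two_ne_zero), zpow_natCast, zpow_one]
  have hz3 : (2:ℝ)^((k:ℤ)-2)*δ = P/4 := by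
    rw [show ((k:ℤ)-2) = (k:ℤ) - (2:ℤ) by ring, zpow_sub₀ (two_ne_zero), zpow_natCast]
    norm_num [hP]; ring
  have hz4 : (2:ℝ)^((k:ℤ)+2)*δ = 4*P := by
    rw [zpow_add₀ (two_ne_zero), zpow_natCast]
    norm_num [hP]; ring
  set tk : ℝ := (1 - (2:ℝ)^(k:ℤ)*δ)/(1-δ) with htk
  set tk1 : ℝ := (1 - (2:ℝ)^((k:ℤ)-1)*δ)/(1-δ) with htk1
  have htk0 : 0 ≤ tk := by
    apply div_nonneg _ hδ1.le; rw [hz1]; linarith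
  have htkle : tk ≤ 1 := by
    rw [div_le_one hδ1, hz1]; linarith
  have htk10 : 0 ≤ tk1 := by
    apply div_nonneg _ hδ1.le; rw [hz2]; nlinarith
  have htk1le : tk1 ≤ 1 := by
    rw [div_le_one hδ1, hz2]; nlinarith
  set a := herm w ζ with ha
  have hwn : ‖w‖ < 1 := by
    have := hw1.1; rwa [mem_ball_zero_iff] at this
  have han : ‖a‖ < 1 := by
    calc ‖a‖ ≤ ‖ζ‖ * ‖w‖ := by rw [ha, herm_eq_inner]; exact norm_inner_le_norm ζ w
    _ ≤ 1 * ‖w‖ := by nlinarith [norm_nonneg (w : En n)]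
    _ < 1 := by linarith
  -- norms of the dilated centers
  have hnk : 1 - ‖tk • ζ‖ = P := by
    rw [norm_smul, Real.norm_eq_abs, _root_.abs_of_nonneg htk0, hζn, htk,
      div_mul_cancel₀ _ (ne_of_gt hδ1), hz1]; ring
  have hnk1 : 1 - ‖tk1 • ζ‖ = P/2 := by
    rw [norm_smul, Real.norm_eq_abs, _root_.abs_of_nonneg htk10, hζn, htk1,
      div_mul_cancel₀ _ (ne_of_gt hδ1), hz2]; ring
  set dk : ℝ := ‖1 - (tk:ℂ) * a‖ with hdk
  set dk1 : ℝ := ‖1 - (tk1:ℂ) * a‖ with hdk1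
  have hcond1 : 1/2 < P / dk := by
    have := hw1.2
    rwa [herm_smul_right, hnk, ← ha, ← hdk] at this
  have hdk0 : 0 < dk := by
    rcases lt_or_eq_of_le (norm_nonneg (1 - (tk:ℂ)*a)) with h | h
    · exact h
    · rw [← hdk] at h; rw [← h] at hcond1; simp at hcond1; linarith
  have hdklt : dk < 2*P := by
    rw [lt_div_iff₀ hdk0] at hcond1; linarith
  have hdk10 : 0 < dk1 := by
    rcases lt_or_eq_of_le (norm_nonneg (1 - (tk1:ℂ)*a)) with h | h
    · exact h
    · exfalso
      have h0 : (1 : ℂ) = (tk1:ℂ) * a := by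
        have h1 : (1 : ℂ) - (tk1:ℂ)*a = 0 := norm_eq_zero.mp h.symm
        linear_combination h1
      have h2 : (1:ℝ) = tk1 * ‖a‖ := by
        calc (1:ℝ) = ‖(1:ℂ)‖ := by simp
        _ = ‖(tk1:ℂ)*a‖ := by rw [← h0]
        _ = tk1 * ‖a‖ := by
            rw [norm_mul, Complex.norm_real, Real.norm_eq_abs, _root_.abs_of_nonneg htk10]
      nlinarith [norm_nonneg a]
  have hcond2 : P/2 / dk1 ≤ 1/2 := by
    by_contra hc
    push_neg at hc
    exact hw2 ⟨hw1.1, by rwa [herm_smul_right, hnk1, ← ha, ← hdk1]⟩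
  have hdk1ge : P ≤ dk1 := by
    rw [div_le_iff₀ hdk10] at hcond2; linarith
  -- bounds on 1 - tk and 1 - tk1
  have h1tk : 1 - tk ≤ 4/3 * P := by
    have he : 1 - tk = (P - δ)/(1-δ) := by
      rw [htk, hz1]; field_simp; rw [hP]; ring
    rw [he, div_le_iff₀ hδ1]
    exact aux1 P δ hδ0 hδ4 hP0
  have h1tk1 : 1 - tk1 ≤ 2/3 * P := by
    have he : 1 - tk1 = (P/2 - δ)/(1-δ) := by
      rw [htk1, hz2]; field_simp; ring
    rw [he, div_le_iff₀ hδ1]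
    exact aux2 P δ hδ0 hδ4 hP0
  -- triangle inequalities
  have hnormtk : ‖((tk:ℂ) - 1) * a‖ ≤ 1 - tk := by
    have h1 : ‖(tk:ℂ) - 1‖ = 1 - tk := by
      rw [show ((tk:ℂ) - 1) = ((tk - 1 : ℝ) : ℂ) by push_cast; ring,
        Complex.norm_real, Real.norm_eq_abs, _root_.abs_of_nonpos (by linarith : tk - 1 ≤ 0)]
      ring
    rw [norm_mul, h1]
    exact mul_le_of_le_one_right (by linarith) han.le
  have hnormtk1 : ‖(1 - (tk1:ℂ)) * a‖ ≤ 1 - tk1 := by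
    have h1 : ‖(1:ℂ) - (tk1:ℂ)‖ = 1 - tk1 := by
      rw [show ((1:ℂ) - (tk1:ℂ)) = ((1 - tk1 : ℝ) : ℂ) by push_cast; ring,
        Complex.norm_real, Real.norm_eq_abs, _root_.abs_of_nonneg (by linarith : (0:ℝ) ≤ 1 - tk1)]
    rw [norm_mul, h1]
    exact mul_le_of_le_one_right (by linarith) han.le
  constructor
  · rw [hz3]
    have htri : dk1 ≤ ‖1 - a‖ + ‖(1 - (tk1:ℂ)) * a‖ := by
      calc dk1 = ‖(1 - a) + (1 - (tk1:ℂ)) * a‖ := by rw [hdk1]; congr 1; ring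
      _ ≤ ‖1 - a‖ + ‖(1 - (tk1:ℂ)) * a‖ := norm_add_le _ _
    linarith
  · rw [hz4]
    have htri : ‖1 - a‖ ≤ dk + ‖((tk:ℂ) - 1) * a‖ := by
      calc ‖1 - a‖ = ‖(1 - (tk:ℂ)*a) + ((tk:ℂ) - 1) * a‖ := by congr 1; ring
      _ ≤ dk + ‖((tk:ℂ) - 1) * a‖ := norm_add_le _ _
    linarith
end
end
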